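/- arXiv:1901.10651 — 2 statements merged into one kernel-verified Lean document; each statement's English description precedes it below -/
import Mathlib

section
/- Let k ≥ 1 and let μ_1, μ_2 be Borel probability measures on ℝ^k with finite second moments. Suppose μ_1 has an orthogonal cone structure with parameters (σ, δ, r) where σ < π/4. Let s, t > 0 be such that σ + s < π/4, and suppose there exists a Borel probability measure π on ℝ^k × ℝ^k whose first and second marginals are μ_1 and μ_2 respectively and such that ∫ |x − y|² dπ(x,y) ≤ (r t sin(s)/√k)² (i.e. the 2-Wasserstein distance W_2(μ_1, μ_2) is at most r t sin(s)/√k). Then μ_2 has an orthogonal cone structure with parameters (σ + s, δ + t², r(1 − sin(s))). -/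
open MeasureTheory Real
open scoped ENNReal

noncomputable section

/-- The cone `C(e, σ, r) = { z : z ⬝ e > cos σ · ‖z‖, ‖z‖ > r }`. -/
def coneSet {k : ℕ} (e : EuclideanSpace ℝ (Fin k)) (σ r : ℝ) :
    Set (EuclideanSpace ℝ (Fin k)) :=
  {z | Real.cos σ * ‖z‖ < (inner ℝ z e : ℝ) ∧ r < ‖z‖}

/-- A measure on `ℝ^k` has an orthogonal cone structure with parameters `(σ, δ, r)`. -/
def HasOrthConeStructure {k : ℕ} (μ : Measure (EuclideanSpace ℝ (Fin k)))
    (σ δ r : ℝ) : Prop :=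
  ∃ e : OrthonormalBasis (Fin k) ℝ (EuclideanSpace ℝ (Fin k)),
    ENNReal.ofReal (1 - δ) ≤ μ (⋃ j, coneSet (e j) σ r)

/-!
If `x ∈ C(e, σ, r)` and `‖x - y‖ ≤ r sin s < ‖x‖ sin s`, then the angle between `x` and `y` is
less than `s` (the ball of radius `‖x‖ sin s` about `x` lies in the cone of half-angle `s` about `x`),
so by the triangle inequality for angles `y ∈ C(e, σ + s, r (1 - sin s))`. By Markov's inequality a
coupling of cost at most `(r t sin s)²` moves mass at most `t²` by more than `r sin s`, so at most
`t²` of the cone mass of `μ₁` is lost in `μ₂`.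
-/

open InnerProductGeometry

section Angle

variable {V : Type*} [NormedAddCommGroup V] [InnerProductSpace ℝ V]

lemma cos_mul_norm_lt_inner_iff {e z : V} (he : ‖e‖ = 1) {θ : ℝ} (hθ : θ ∈ Set.Icc 0 π) :
    cos θ * ‖z‖ < inner ℝ z e ↔ z ≠ 0 ∧ angle z e < θ := by
  rcases eq_or_ne z 0 with rfl | hz
  · simp
  rw [← cos_angle_mul_norm_mul_norm, he, mul_one, mul_lt_mul_iff_left₀ (norm_pos_iff.2 hz),
    strictAntiOn_cos.lt_iff_gt hθ ⟨angle_nonneg z e, angle_le_pi z e⟩]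
  exact ⟨fun h => ⟨hz, h⟩, And.right⟩

lemma angle_lt_of_norm_sub_lt {x y : V} {s : ℝ} (hs : s ∈ Set.Icc 0 π)
    (hxy : ‖x - y‖ < ‖x‖ * sin s) : angle x y < s := by
  have hlaw : ‖x - y‖ ^ 2 = ‖x‖ ^ 2 - 2 * inner ℝ x y + ‖y‖ ^ 2 := norm_sub_sq_real x y
  -- `‖x - y‖² < ‖x‖² sin² s` gives `2⟪x, y⟫ > (‖x‖ cos s)² + ‖y‖² ≥ 2 ‖x‖ ‖y‖ cos s`.
  have hinner : cos s * (‖x‖ * ‖y‖) < inner ℝ x y := by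
    have hsq : ‖x - y‖ ^ 2 < (‖x‖ * sin s) ^ 2 := by gcongr
    nlinarith [sin_sq_add_cos_sq s, sq_nonneg (‖x‖ * cos s - ‖y‖)]
  have hx : x ≠ 0 := by
    rintro rfl
    simp at hxy
    linarith [norm_nonneg y]
  have hy : y ≠ 0 := by
    rintro rfl
    simp at hinner
  rw [← cos_angle_mul_norm_mul_norm, mul_lt_mul_iff_left₀ (by positivity)] at hinner
  exact (strictAntiOn_cos.lt_iff_gt hs ⟨angle_nonneg x y, angle_le_pi x y⟩).1 hinner

end Angle

section Cone

variable {k : ℕ}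

lemma isOpen_coneSet (e : EuclideanSpace ℝ (Fin k)) (σ r : ℝ) : IsOpen (coneSet e σ r) :=
  (isOpen_lt (continuous_const.mul continuous_norm) (continuous_id.inner continuous_const)).inter
    (isOpen_lt continuous_const continuous_norm)

lemma mem_coneSet_iff {e z : EuclideanSpace ℝ (Fin k)} (he : ‖e‖ = 1) {θ r : ℝ}
    (hθ : θ ∈ Set.Icc 0 π) : z ∈ coneSet e θ r ↔ (z ≠ 0 ∧ angle z e < θ) ∧ r < ‖z‖ :=
  and_congr_left' (cos_mul_norm_lt_inner_iff he hθ)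

lemma mem_coneSet_of_norm_sub_le {e x y : EuclideanSpace ℝ (Fin k)} (he : ‖e‖ = 1)
    {σ s r : ℝ} (hσ : 0 ≤ σ) (hs : 0 < s) (hσs : σ + s ≤ π) (hx : x ∈ coneSet e σ r)
    (hxy : ‖x - y‖ ≤ r * sin s) : y ∈ coneSet e (σ + s) (r * (1 - sin s)) := by
  obtain ⟨⟨-, hxe⟩, hrx⟩ := (mem_coneSet_iff he ⟨hσ, by linarith⟩).1 hx
  have hsin : 0 < sin s := sin_pos_of_pos_of_lt_pi hs (by linarith [angle_nonneg x e])
  have hxy' : ‖x - y‖ < ‖x‖ * sin s := hxy.trans_lt (by gcongr)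
  have hyx : angle y x < s := by
    rw [angle_comm]
    exact angle_lt_of_norm_sub_lt ⟨hs.le, by linarith⟩ hxy'
  refine (mem_coneSet_iff he ⟨by linarith, hσs⟩).2 ⟨⟨?_, ?_⟩, ?_⟩
  · rintro rfl
    rw [sub_zero] at hxy'
    nlinarith [sin_le_one s, norm_nonneg x]
  · linarith [angle_le_angle_add_angle y x e]
  · linarith [norm_sub_norm_le x y]

end Cone

section Coupling

variable {α β : Type*} [MeasurableSpace α] [MeasurableSpace β]

lemma measure_fst_le_measure_snd_add (plan : Measure (α × β)) {A : Set α} (hA : MeasurableSet A)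
    (B : Set β) (G : Set (α × β)) (h : ∀ p ∉ G, p.1 ∈ A → p.2 ∈ B) :
    plan.fst A ≤ plan.snd B + plan G :=
  calc plan.fst A = plan (Prod.fst ⁻¹' A) := Measure.fst_apply hA
    _ ≤ plan (Prod.snd ⁻¹' B ∪ G) := measure_mono fun p hp => by
        by_cases hp' : p ∈ G
        exacts [Or.inr hp', Or.inl (h p hp' hp)]
    _ ≤ plan (Prod.snd ⁻¹' B) + plan G := measure_union_le _ _
    _ ≤ plan.snd B + plan G := by gcongr; exact Measure.le_map_apply measurable_snd.aemeasurable B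

variable {E : Type*} [NormedAddCommGroup E] [MeasurableSpace E] [BorelSpace E]
  [SecondCountableTopology E]

lemma measure_lt_norm_sub_le_lintegral_div (plan : Measure (E × E)) {ρ : ℝ} (hρ : 0 < ρ) :
    plan {p | ρ < ‖p.1 - p.2‖} ≤
      (∫⁻ p, ENNReal.ofReal (‖p.1 - p.2‖ ^ 2) ∂plan) / ENNReal.ofReal (ρ ^ 2) := by
  calc plan {p | ρ < ‖p.1 - p.2‖}
      ≤ plan {p | ENNReal.ofReal (ρ ^ 2) ≤ ENNReal.ofReal (‖p.1 - p.2‖ ^ 2)} :=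
        measure_mono fun p (hp : ρ < ‖p.1 - p.2‖) => ENNReal.ofReal_le_ofReal (by gcongr)
    _ ≤ _ := meas_ge_le_lintegral_div (by fun_prop) (by simpa using hρ.ne') ENNReal.ofReal_ne_top

end Coupling

theorem statement2_general {k : ℕ} (hk : 1 ≤ k)
    (μ₁ μ₂ : Measure (EuclideanSpace ℝ (Fin k)))
    (σ δ r s t : ℝ) (hσ : σ ∈ Set.Ioo 0 (π / 4)) (hr : 0 < r)
    (hs : 0 < s) (hangle : σ + s < π / 4)
    (hμ₁ : HasOrthConeStructure μ₁ σ δ r)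
    (plan : Measure (EuclideanSpace ℝ (Fin k) × EuclideanSpace ℝ (Fin k)))
    (hfst : plan.fst = μ₁) (hsnd : plan.snd = μ₂)
    (hcost : ∫⁻ p, ENNReal.ofReal (‖p.1 - p.2‖ ^ 2) ∂plan ≤
      ENNReal.ofReal ((r * t * Real.sin s / Real.sqrt (k : ℝ)) ^ 2)) :
    HasOrthConeStructure μ₂ (σ + s) (δ + t ^ 2) (r * (1 - Real.sin s)) := by
  obtain ⟨e, he⟩ := hμ₁
  refine ⟨e, ?_⟩
  have hρ : 0 < r * sin s := mul_pos hr (sin_pos_of_pos_of_lt_pi hs (by linarith [pi_pos, hσ.1]))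
  have hfar : plan {p | r * sin s < ‖p.1 - p.2‖} ≤ ENNReal.ofReal (t ^ 2) := by
    refine (measure_lt_norm_sub_le_lintegral_div plan hρ).trans (ENNReal.div_le_of_le_mul ?_)
    refine hcost.trans ?_
    rw [← ENNReal.ofReal_mul (sq_nonneg t)]
    refine ENNReal.ofReal_le_ofReal ?_
    have hk' : (1 : ℝ) ≤ k := by exact_mod_cast hk
    rw [div_pow, sq_sqrt (by linarith), div_le_iff₀ (by linarith)]
    nlinarith [sq_nonneg (t * (r * sin s))]
  have hcone := measure_fst_le_measure_snd_add plan
    (MeasurableSet.iUnion fun j => (isOpen_coneSet (e j) σ r).measurableSet)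
    (⋃ j, coneSet (e j) (σ + s) (r * (1 - sin s))) {p | r * sin s < ‖p.1 - p.2‖}
    fun p hp hp1 => by
      obtain ⟨j, hj⟩ := Set.mem_iUnion.1 hp1
      exact Set.mem_iUnion.2 ⟨j, mem_coneSet_of_norm_sub_le (e.orthonormal.1 j) hσ.1.le hs
        (by linarith [pi_pos]) hj (not_lt.1 hp)⟩
  rw [hfst, hsnd] at hcone
  calc ENNReal.ofReal (1 - (δ + t ^ 2)) = ENNReal.ofReal (1 - δ) - ENNReal.ofReal (t ^ 2) := by
        rw [← ENNReal.ofReal_sub _ (sq_nonneg t), sub_add_eq_sub_sub]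
    _ ≤ _ := tsub_le_iff_right.2 ((he.trans hcone).trans (by gcongr))

/-- stability of orthogonal cone structures under Wasserstein perturbations. -/
theorem statement2 {k : ℕ} (hk : 1 ≤ k)
    (μ₁ μ₂ : Measure (EuclideanSpace ℝ (Fin k)))
    [IsProbabilityMeasure μ₁] [IsProbabilityMeasure μ₂]
    (hm₁ : ∫⁻ x, ENNReal.ofReal (‖x‖ ^ 2) ∂μ₁ < ⊤)
    (hm₂ : ∫⁻ x, ENNReal.ofReal (‖x‖ ^ 2) ∂μ₂ < ⊤)
    (σ δ r s t : ℝ) (hσ : σ ∈ Set.Ioo 0 (π / 4)) (hδ : δ ∈ Set.Ico (0 : ℝ) 1) (hr : 0 < r)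
    (hs : 0 < s) (ht : 0 < t) (hangle : σ + s < π / 4)
    (hμ₁ : HasOrthConeStructure μ₁ σ δ r)
    (plan : Measure (EuclideanSpace ℝ (Fin k) × EuclideanSpace ℝ (Fin k)))
    [IsProbabilityMeasure plan]
    (hfst : plan.fst = μ₁) (hsnd : plan.snd = μ₂)
    (hcost : ∫⁻ p, ENNReal.ofReal (‖p.1 - p.2‖ ^ 2) ∂plan ≤
      ENNReal.ofReal ((r * t * Real.sin s / Real.sqrt (k : ℝ)) ^ 2)) :
    HasOrthConeStructure μ₂ (σ + s) (δ + t ^ 2) (r * (1 - Real.sin s)) :=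
  statement2_general hk μ₁ μ₂ σ δ r s t hσ hr hs hangle hμ₁ plan hfst hsnd hcost
end
end

section
/- Assume ρ_k(x) > 0 for all x ∈ ℝ^d and all k, each C_k < ∞, S < 1 and N·S < 1. Then every u ∈ C¹(ℝ^d) with ∫(|∇u|² + u²) ρ dx < ∞, ∫ u² ρ dx = 1, and ⟨u, q_j⟩_ρ = 0 for all j = 1, …, N satisfies √(Θ(1 − N S)) − √(C N S)/(1 − S) ≤ (∫_{ℝ^d} |∇u|² ρ dx)^{1/2}. (By the max–min principle this yields the paper's lower bound (√(Θ(1 − N S)) − √(C N S)/(1 − S))² ≤ λ_{N+1} on the (N+1)-st eigenvalue of Δ_ρ.) -/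
/-!
Write `m_k = ∫ u ρ_k`. Since `q_k² ρ = w_k ρ_k`, orthogonality of `u` to `q_k` gives
`w_k m_k = ∫ u q_k (q_k - 1) ρ`, and Cauchy–Schwarz with
`(1 - q_k)² ≤ 1 - q_k² = ∑_{i ≠ k} w_i ρ_i / ρ` bounds `w_k m_k²` by `S`. The indivisibility
inequality applied to `u - m_k` under `ρ_k` gives `Θ (∫ u² ρ_k - m_k²) ≤ ∫ |∇u|² ρ_k`; averaging
with the weights `w_k` yields `Θ (1 - N S) ≤ ∫ |∇u|² ρ`, and the coupling correction
`√(C N S) / (1 - S)` is nonnegative.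
-/

open MeasureTheory Real

noncomputable section

/-- The set of Rayleigh quotients over admissible `C¹` test functions; the
indivisibility parameter `Θ_k` of the paper is its infimum. -/
def rayleighSet {d : ℕ} (ρk : EuclideanSpace ℝ (Fin d) → ℝ) : Set ℝ :=
  {R | ∃ f : EuclideanSpace ℝ (Fin d) → ℝ,
      ContDiff ℝ 1 f ∧
      Integrable (fun x => ‖gradient f x‖ ^ 2 * ρk x) ∧
      Integrable (fun x => f x ^ 2 * ρk x) ∧
      (∫ x, f x * ρk x) = 0 ∧
      0 < ∫ x, f x ^ 2 * ρk x ∧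
      R = (∫ x, ‖gradient f x‖ ^ 2 * ρk x) / ∫ x, f x ^ 2 * ρk x}

section WeightedL2

variable {α : Type*} [MeasurableSpace α] {μ : Measure α} {ρ f : α → ℝ}

theorem sq_integral_mul_mul_le {g : α → ℝ} (hρ : ∀ x, 0 ≤ ρ x)
    (hf : Integrable (fun x => f x ^ 2 * ρ x) μ) (hg : Integrable (fun x => g x ^ 2 * ρ x) μ)
    (hfg : Integrable (fun x => f x * g x * ρ x) μ) :
    (∫ x, f x * g x * ρ x ∂μ) ^ 2 ≤ (∫ x, f x ^ 2 * ρ x ∂μ) * ∫ x, g x ^ 2 * ρ x ∂μ := by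
  have hquad : ∀ t : ℝ, 0 ≤ (∫ x, f x ^ 2 * ρ x ∂μ) * (t * t)
      + (2 * ∫ x, f x * g x * ρ x ∂μ) * t + ∫ x, g x ^ 2 * ρ x ∂μ := by
    intro t
    have hexpand : (fun x => (t * f x + g x) ^ 2 * ρ x) = fun x =>
        (t ^ 2 * (f x ^ 2 * ρ x) + 2 * t * (f x * g x * ρ x)) + g x ^ 2 * ρ x := by
      funext x; ring
    have h : 0 ≤ ∫ x, (t * f x + g x) ^ 2 * ρ x ∂μ :=
      integral_nonneg fun x => mul_nonneg (sq_nonneg _) (hρ x)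
    have hsum : Integrable (fun x => t ^ 2 * (f x ^ 2 * ρ x) + 2 * t * (f x * g x * ρ x)) μ :=
      (hf.const_mul _).add (hfg.const_mul _)
    rw [hexpand, integral_add hsum hg,
      integral_add (hf.const_mul _) (hfg.const_mul _), integral_const_mul,
      integral_const_mul] at h
    linarith
  have h := discrim_le_zero hquad
  rw [discrim] at h
  linarith

theorem integrable_mul_of_integrable_sq_mul (hρ : ∀ x, 0 ≤ ρ x) (hρi : Integrable ρ μ)
    (hf : AEStronglyMeasurable f μ) (hf2 : Integrable (fun x => f x ^ 2 * ρ x) μ) :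
    Integrable (fun x => f x * ρ x) μ := by
  refine ((hf2.add hρi).div_const 2).mono' (hf.mul hρi.aestronglyMeasurable)
    (Filter.Eventually.of_forall fun x => ?_)
  rw [Pi.add_apply, norm_mul, norm_of_nonneg (hρ x), Real.norm_eq_abs]
  have h := mul_nonneg (sq_nonneg (|f x| - 1)) (hρ x)
  rw [sub_sq, sq_abs] at h
  nlinarith [h]

theorem integrable_sub_sq_mul (c : ℝ) (hρi : Integrable ρ μ)
    (hf : Integrable (fun x => f x * ρ x) μ) (hf2 : Integrable (fun x => f x ^ 2 * ρ x) μ) :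
    Integrable (fun x => (f x - c) ^ 2 * ρ x) μ := by
  have hexpand : (fun x => (f x - c) ^ 2 * ρ x) =
      fun x => f x ^ 2 * ρ x - 2 * c * (f x * ρ x) + c ^ 2 * ρ x := by
    funext x; ring
  rw [hexpand]
  exact (hf2.sub (hf.const_mul _)).add (hρi.const_mul _)

theorem integral_sub_integral_mul (hρi : Integrable ρ μ) (hρ1 : ∫ x, ρ x ∂μ = 1)
    (hf : Integrable (fun x => f x * ρ x) μ) :
    ∫ x, (f x - ∫ y, f y * ρ y ∂μ) * ρ x ∂μ = 0 := by
  simp_rw [sub_mul]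
  rw [integral_sub hf (hρi.const_mul _), integral_const_mul, hρ1, mul_one, sub_self]

theorem integral_sub_integral_sq_mul (hρi : Integrable ρ μ) (hρ1 : ∫ x, ρ x ∂μ = 1)
    (hf : Integrable (fun x => f x * ρ x) μ) (hf2 : Integrable (fun x => f x ^ 2 * ρ x) μ) :
    ∫ x, (f x - ∫ y, f y * ρ y ∂μ) ^ 2 * ρ x ∂μ =
      ∫ x, f x ^ 2 * ρ x ∂μ - (∫ x, f x * ρ x ∂μ) ^ 2 := by
  set m := ∫ y, f y * ρ y ∂μ
  have hexpand : (fun x => (f x - m) ^ 2 * ρ x) =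
      fun x => f x ^ 2 * ρ x - 2 * m * (f x * ρ x) + m ^ 2 * ρ x := by
    funext x; ring
  have hcross : Integrable (fun x => f x ^ 2 * ρ x - 2 * m * (f x * ρ x)) μ :=
    hf2.sub (hf.const_mul _)
  rw [hexpand, integral_add hcross (hρi.const_mul _), integral_sub hf2 (hf.const_mul _),
    integral_const_mul, integral_const_mul, hρ1]
  ring

/-- Orthogonality to `q` lets one replace `q²` by `q² - q = q (q - 1)` before applying
Cauchy–Schwarz, and `(1 - q)² ≤ 1 - q²` for `0 ≤ q ≤ 1`. -/
theorem sq_integral_mul_sq_mul_le_of_integral_mul_eq_zero {u q : α → ℝ} (hρ : ∀ x, 0 ≤ ρ x)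
    (hρi : Integrable ρ μ) (hu : AEStronglyMeasurable u μ) (hq : AEStronglyMeasurable q μ)
    (hq0 : ∀ x, 0 ≤ q x) (hq1 : ∀ x, q x ≤ 1) (hu2 : Integrable (fun x => u x ^ 2 * ρ x) μ)
    (horth : ∫ x, u x * q x * ρ x ∂μ = 0) :
    (∫ x, u x * q x ^ 2 * ρ x ∂μ) ^ 2 ≤
      (∫ x, u x ^ 2 * ρ x ∂μ) * ∫ x, q x ^ 2 * (1 - q x ^ 2) * ρ x ∂μ := by
  have huρ := integrable_mul_of_integrable_sq_mul hρ hρi hu hu2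
  have hq_norm : ∀ x, ‖q x‖ ≤ 1 := fun x => abs_le.2 ⟨by linarith [hq0 x], hq1 x⟩
  have huq : Integrable (fun x => u x * q x * ρ x) μ :=
    (huρ.bdd_mul hq (ae_of_all _ hq_norm)).congr (ae_of_all _ fun x => by ring)
  have huq2 : Integrable (fun x => u x * q x ^ 2 * ρ x) μ :=
    (huq.bdd_mul hq (ae_of_all _ hq_norm)).congr (ae_of_all _ fun x => by ring)
  have hdom : Integrable (fun x => q x ^ 2 * (1 - q x ^ 2) * ρ x) μ :=
    hρi.bdd_mul (c := 1) ((hq.pow 2).mul (aestronglyMeasurable_const.sub (hq.pow 2)))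
      (ae_of_all _ fun x => by
        have hq2 : 0 ≤ q x ^ 2 * (1 - q x ^ 2) :=
          mul_nonneg (sq_nonneg _) (sub_nonneg.2 (pow_le_one₀ (hq0 x) (hq1 x)))
        exact abs_le.2 ⟨by linarith, by nlinarith [sq_nonneg (q x ^ 2)]⟩)
  have hpointwise : ∀ x, (q x * (q x - 1)) ^ 2 * ρ x ≤ q x ^ 2 * (1 - q x ^ 2) * ρ x :=
    fun x => mul_le_mul_of_nonneg_right
      (by nlinarith [mul_nonneg (pow_nonneg (hq0 x) 3) (sub_nonneg.2 (hq1 x))]) (hρ x)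
  have hg2 : Integrable (fun x => (q x * (q x - 1)) ^ 2 * ρ x) μ :=
    hdom.mono' (((hq.mul (hq.sub aestronglyMeasurable_const)).pow 2).mul hρi.1)
      (ae_of_all _ fun x => by
        rw [norm_of_nonneg (mul_nonneg (sq_nonneg _) (hρ x))]; exact hpointwise x)
  have hshift : (fun x => u x * (q x * (q x - 1)) * ρ x) =
      fun x => u x * q x ^ 2 * ρ x - u x * q x * ρ x := by
    funext x; ring
  have hmean : ∫ x, u x * q x ^ 2 * ρ x ∂μ = ∫ x, u x * (q x * (q x - 1)) * ρ x ∂μ := by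
    rw [hshift, integral_sub huq2 huq, horth, sub_zero]
  calc (∫ x, u x * q x ^ 2 * ρ x ∂μ) ^ 2
      ≤ (∫ x, u x ^ 2 * ρ x ∂μ) * ∫ x, (q x * (q x - 1)) ^ 2 * ρ x ∂μ := by
        rw [hmean]
        exact sq_integral_mul_mul_le hρ hu2 hg2 (by rw [hshift]; exact huq2.sub huq)
    _ ≤ (∫ x, u x ^ 2 * ρ x ∂μ) * ∫ x, q x ^ 2 * (1 - q x ^ 2) * ρ x ∂μ :=
        mul_le_mul_of_nonneg_left (integral_mono hg2 hdom hpointwise)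
          (integral_nonneg fun x => mul_nonneg (sq_nonneg _) (hρ x))

end WeightedL2

section Mixture

variable {α ι : Type*} [Fintype ι] {w : ι → ℝ} {ρ : ι → α → ℝ}

def mixture (w : ι → ℝ) (ρ : ι → α → ℝ) (x : α) : ℝ := ∑ k, w k * ρ k x

/-- The paper's `q_k = √(w_k ρ_k / ρ)`. -/
def mixtureAmplitude (w : ι → ℝ) (ρ : ι → α → ℝ) (k : ι) (x : α) : ℝ :=
  √(w k * ρ k x / mixture w ρ x)

theorem mul_le_mixture (hw : ∀ k, 0 < w k) (hρ : ∀ k x, 0 < ρ k x) (j : ι) (x : α) :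
    w j * ρ j x ≤ mixture w ρ x :=
  Finset.single_le_sum (fun k _ => (mul_pos (hw k) (hρ k x)).le) (Finset.mem_univ j)

theorem mixture_nonneg (hw : ∀ k, 0 < w k) (hρ : ∀ k x, 0 < ρ k x) (x : α) :
    0 ≤ mixture w ρ x :=
  Finset.sum_nonneg fun k _ => (mul_pos (hw k) (hρ k x)).le

theorem mixture_pos (hw : ∀ k, 0 < w k) (hρ : ∀ k x, 0 < ρ k x) (j : ι) (x : α) :
    0 < mixture w ρ x :=
  (mul_pos (hw j) (hρ j x)).trans_le (mul_le_mixture hw hρ j x)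

theorem mixtureAmplitude_sq_mul_mixture (hw : ∀ k, 0 < w k) (hρ : ∀ k x, 0 < ρ k x)
    (j : ι) (x : α) : mixtureAmplitude w ρ j x ^ 2 * mixture w ρ x = w j * ρ j x := by
  rw [mixtureAmplitude, sq_sqrt (div_nonneg (mul_pos (hw j) (hρ j x)).le
    (mixture_nonneg hw hρ x)), div_mul_cancel₀ _ (mixture_pos hw hρ j x).ne']

theorem mixtureAmplitude_le_one (hw : ∀ k, 0 < w k) (hρ : ∀ k x, 0 < ρ k x) (j : ι) (x : α) :
    mixtureAmplitude w ρ j x ≤ 1 :=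
  sqrt_le_one.2 ((div_le_one (mixture_pos hw hρ j x)).2 (mul_le_mixture hw hρ j x))

theorem mixtureAmplitude_sq_mul_one_sub_sq_mul_mixture [DecidableEq ι] (hw : ∀ k, 0 < w k)
    (hρ : ∀ k x, 0 < ρ k x) (j : ι) (x : α) :
    mixtureAmplitude w ρ j x ^ 2 * (1 - mixtureAmplitude w ρ j x ^ 2) * mixture w ρ x =
      ∑ i ∈ Finset.univ.erase j, w j * w i * (ρ j x * ρ i x / mixture w ρ x) := by
  have hmix := (mixture_pos hw hρ j x).ne'
  have hrest : ∑ i ∈ Finset.univ.erase j, w i * ρ i x = mixture w ρ x - w j * ρ j x :=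
    Finset.sum_erase_eq_sub (Finset.mem_univ j)
  rw [mixtureAmplitude, sq_sqrt (div_nonneg (mul_pos (hw j) (hρ j x)).le
    (mixture_nonneg hw hρ x))]
  calc _ = w j * ρ j x / mixture w ρ x * (mixture w ρ x - w j * ρ j x) := by
        field_simp
    _ = _ := by
        rw [← hrest, Finset.mul_sum]
        exact Finset.sum_congr rfl fun i _ => by ring

variable [MeasurableSpace α] {μ : Measure α}

theorem integrable_mixture (hρi : ∀ k, Integrable (ρ k) μ) : Integrable (mixture w ρ) μ :=
  integrable_finsetSum _ fun k _ => (hρi k).const_mul (w k)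

theorem integral_mul_mixture {f : α → ℝ} (hf : ∀ k, Integrable (fun x => f x * ρ k x) μ) :
    ∫ x, f x * mixture w ρ x ∂μ = ∑ k, w k * ∫ x, f x * ρ k x ∂μ := by
  have hexpand : (fun x => f x * mixture w ρ x) = fun x => ∑ k, w k * (f x * ρ k x) := by
    funext x
    rw [mixture, Finset.mul_sum]
    exact Finset.sum_congr rfl fun k _ => by ring
  rw [hexpand, integral_finsetSum _ fun k _ => (hf k).const_mul _]
  exact Finset.sum_congr rfl fun k _ => integral_const_mul _ _

theorem MeasureTheory.Integrable.mul_of_mul_mixture {f : α → ℝ} {j : ι} (hw : ∀ k, 0 < w k)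
    (hρ : ∀ k x, 0 < ρ k x) (hf0 : ∀ x, 0 ≤ f x) (hf : AEStronglyMeasurable f μ)
    (hρm : AEStronglyMeasurable (ρ j) μ)
    (hfρ : Integrable (fun x => f x * mixture w ρ x) μ) :
    Integrable (fun x => f x * ρ j x) μ := by
  refine (hfρ.const_mul (w j)⁻¹).mono' (hf.mul hρm) (Filter.Eventually.of_forall fun x => ?_)
  rw [norm_of_nonneg (mul_nonneg (hf0 x) (hρ j x).le), inv_mul_eq_div, le_div_iff₀ (hw j)]
  nlinarith [mul_le_mul_of_nonneg_left (mul_le_mixture hw hρ j x) (hf0 x)]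

theorem integrable_mul_div_mixture (hw : ∀ k, 0 < w k) (hρ : ∀ k x, 0 < ρ k x)
    (hρi : ∀ k, Integrable (ρ k) μ) (i j : ι) :
    Integrable (fun x => ρ i x * ρ j x / mixture w ρ x) μ := by
  refine ((hρi i).const_mul (w j)⁻¹).mono'
    (((hρi i).1.mul (hρi j).1).div₀ (integrable_mixture hρi).1)
    (Filter.Eventually.of_forall fun x => ?_)
  have hmix := mixture_pos hw hρ j x
  rw [norm_of_nonneg (div_nonneg (mul_pos (hρ i x) (hρ j x)).le hmix.le), mul_div_assoc,
    inv_mul_eq_div, le_div_iff₀ (hw j)]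
  calc ρ i x * (ρ j x / mixture w ρ x) * w j = ρ i x * (w j * ρ j x / mixture w ρ x) := by ring
    _ ≤ ρ i x * 1 := mul_le_mul_of_nonneg_left
        ((div_le_one hmix).2 (mul_le_mixture hw hρ j x)) (hρ i x).le
    _ = ρ i x := mul_one _

theorem integral_mixtureAmplitude_sq_mul_one_sub_le (hw : ∀ k, 0 < w k) (hw1 : ∑ k, w k = 1)
    (hρ : ∀ k x, 0 < ρ k x) (hρi : ∀ k, Integrable (ρ k) μ) {S : ℝ} (hS0 : 0 ≤ S)
    (hS : ∀ i j, i ≠ j → ∫ x, ρ i x * ρ j x / mixture w ρ x ∂μ ≤ S) (j : ι) :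
    ∫ x, mixtureAmplitude w ρ j x ^ 2 * (1 - mixtureAmplitude w ρ j x ^ 2) * mixture w ρ x ∂μ
      ≤ w j * S := by
  classical
  have hrest : ∑ i ∈ Finset.univ.erase j, w i = 1 - w j := by
    rw [Finset.sum_erase_eq_sub (Finset.mem_univ j), hw1]
  simp_rw [mixtureAmplitude_sq_mul_one_sub_sq_mul_mixture hw hρ j]
  rw [integral_finsetSum _ fun i _ =>
    (integrable_mul_div_mixture hw hρ hρi j i).const_mul _]
  calc ∑ i ∈ Finset.univ.erase j, ∫ x, w j * w i * (ρ j x * ρ i x / mixture w ρ x) ∂μ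
      ≤ ∑ i ∈ Finset.univ.erase j, w j * w i * S := by
        refine Finset.sum_le_sum fun i hi => ?_
        rw [integral_const_mul]
        exact mul_le_mul_of_nonneg_left (hS j i (Finset.ne_of_mem_erase hi).symm)
          (mul_pos (hw j) (hw i)).le
    _ = w j * S * (1 - w j) := by
        rw [← hrest, Finset.mul_sum]
        exact Finset.sum_congr rfl fun i _ => by ring
    _ ≤ w j * S := mul_le_of_le_one_right (mul_nonneg (hw j).le hS0) (by linarith [hw j])

theorem mul_sq_integral_mul_le_of_integral_mul_mixtureAmplitude_eq_zero (hw : ∀ k, 0 < w k)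
    (hw1 : ∑ k, w k = 1) (hρ : ∀ k x, 0 < ρ k x) (hρi : ∀ k, Integrable (ρ k) μ) {S : ℝ}
    (hS0 : 0 ≤ S) (hS : ∀ i j, i ≠ j → ∫ x, ρ i x * ρ j x / mixture w ρ x ∂μ ≤ S)
    {u : α → ℝ} (hu : AEStronglyMeasurable u μ)
    (hu2 : Integrable (fun x => u x ^ 2 * mixture w ρ x) μ) (j : ι)
    (horth : ∫ x, u x * mixtureAmplitude w ρ j x * mixture w ρ x ∂μ = 0) :
    w j * (∫ x, u x * ρ j x ∂μ) ^ 2 ≤ S * ∫ x, u x ^ 2 * mixture w ρ x ∂μ := by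
  have hq : AEStronglyMeasurable (mixtureAmplitude w ρ j) μ :=
    continuous_sqrt.comp_aestronglyMeasurable
      (((hρi j).1.const_mul (w j)).div₀ (integrable_mixture hρi).1)
  have hmean : ∫ x, u x * mixtureAmplitude w ρ j x ^ 2 * mixture w ρ x ∂μ =
      w j * ∫ x, u x * ρ j x ∂μ := by
    rw [← integral_const_mul]
    congr 1 with x
    rw [mul_assoc, mixtureAmplitude_sq_mul_mixture hw hρ]
    ring
  have hproj := sq_integral_mul_sq_mul_le_of_integral_mul_eq_zero
    (mixture_nonneg hw hρ) (integrable_mixture hρi) hu hq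
    (fun x => sqrt_nonneg _) (mixtureAmplitude_le_one hw hρ j) hu2 horth
  rw [hmean] at hproj
  have hoverlap := integral_mixtureAmplitude_sq_mul_one_sub_le hw hw1 hρ hρi hS0 hS j
  have hnorm : 0 ≤ ∫ x, u x ^ 2 * mixture w ρ x ∂μ :=
    integral_nonneg fun x => mul_nonneg (sq_nonneg _) (mixture_nonneg hw hρ x)
  have := hproj.trans (mul_le_mul_of_nonneg_left hoverlap hnorm)
  nlinarith [hw j]

theorem sum_mul_sq_integral_mul_le (hw : ∀ k, 0 < w k) (hw1 : ∑ k, w k = 1)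
    (hρ : ∀ k x, 0 < ρ k x) (hρi : ∀ k, Integrable (ρ k) μ) {S : ℝ} (hS0 : 0 ≤ S)
    (hS : ∀ i j, i ≠ j → ∫ x, ρ i x * ρ j x / mixture w ρ x ∂μ ≤ S)
    {u : α → ℝ} (hu : AEStronglyMeasurable u μ)
    (hu2 : Integrable (fun x => u x ^ 2 * mixture w ρ x) μ)
    (horth : ∀ j, ∫ x, u x * mixtureAmplitude w ρ j x * mixture w ρ x ∂μ = 0) :
    ∑ k, w k * (∫ x, u x * ρ k x ∂μ) ^ 2 ≤
      Fintype.card ι * S * ∫ x, u x ^ 2 * mixture w ρ x ∂μ := by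
  calc ∑ k, w k * (∫ x, u x * ρ k x ∂μ) ^ 2
      ≤ ∑ _k : ι, S * ∫ x, u x ^ 2 * mixture w ρ x ∂μ := Finset.sum_le_sum fun k _ =>
        mul_sq_integral_mul_le_of_integral_mul_mixtureAmplitude_eq_zero hw hw1 hρ hρi hS0 hS hu
          hu2 k (horth k)
    _ = Fintype.card ι * S * ∫ x, u x ^ 2 * mixture w ρ x ∂μ := by
        rw [Finset.sum_const, Finset.card_univ, nsmul_eq_mul, mul_assoc]

theorem mul_sub_le_integral_mul_mixture (hw : ∀ k, 0 < w k) {u g : α → ℝ} {Θ B : ℝ}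
    (hΘ : 0 ≤ Θ) (hu2 : ∀ k, Integrable (fun x => u x ^ 2 * ρ k x) μ)
    (hg : ∀ k, Integrable (fun x => g x * ρ k x) μ)
    (hcomponent : ∀ k, Θ * ((∫ x, u x ^ 2 * ρ k x ∂μ) - (∫ x, u x * ρ k x ∂μ) ^ 2) ≤
      ∫ x, g x * ρ k x ∂μ)
    (hmeans : ∑ k, w k * (∫ x, u x * ρ k x ∂μ) ^ 2 ≤ B) :
    Θ * ((∫ x, u x ^ 2 * mixture w ρ x ∂μ) - B) ≤ ∫ x, g x * mixture w ρ x ∂μ := by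
  rw [integral_mul_mixture hu2, integral_mul_mixture hg]
  calc Θ * (∑ k, w k * (∫ x, u x ^ 2 * ρ k x ∂μ) - B)
      ≤ Θ * (∑ k, w k * (∫ x, u x ^ 2 * ρ k x ∂μ) - ∑ k, w k * (∫ x, u x * ρ k x ∂μ) ^ 2) := by
        gcongr
    _ = ∑ k, w k * (Θ * ((∫ x, u x ^ 2 * ρ k x ∂μ) - (∫ x, u x * ρ k x ∂μ) ^ 2)) := by
        rw [← Finset.sum_sub_distrib, Finset.mul_sum]
        exact Finset.sum_congr rfl fun k _ => by ring
    _ ≤ ∑ k, w k * ∫ x, g x * ρ k x ∂μ :=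
        Finset.sum_le_sum fun k _ => mul_le_mul_of_nonneg_left (hcomponent k) (hw k).le

end Mixture

theorem measurable_gradient {F : Type*} [NormedAddCommGroup F] [InnerProductSpace ℝ F]
    [CompleteSpace F] [MeasurableSpace F] [BorelSpace F] (f : F → ℝ) :
    Measurable (gradient f) :=
  (InnerProductSpace.toDual ℝ F).symm.continuous.measurable.comp (measurable_fderiv ℝ f)

theorem gradient_sub_const {F : Type*} [NormedAddCommGroup F] [InnerProductSpace ℝ F]
    [CompleteSpace F] (f : F → ℝ) (c : ℝ) : gradient (fun y => f y - c) = gradient f := by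
  funext x
  simp only [gradient, fderiv_sub_const]

section Rayleigh

variable {d : ℕ} {ρk : EuclideanSpace ℝ (Fin d) → ℝ}

theorem bddBelow_rayleighSet (hρ : ∀ x, 0 ≤ ρk x) : BddBelow (rayleighSet ρk) := by
  refine ⟨0, ?_⟩
  rintro R ⟨f, -, -, -, -, hpos, rfl⟩
  exact div_nonneg (integral_nonneg fun x => mul_nonneg (sq_nonneg _) (hρ x)) hpos.le

theorem mul_variance_le_of_le_sInf_rayleighSet {Θ : ℝ} (hΘ : Θ ≤ sInf (rayleighSet ρk))
    (hρ : ∀ x, 0 ≤ ρk x) (hρi : Integrable ρk) (hρ1 : ∫ x, ρk x = 1)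
    {u : EuclideanSpace ℝ (Fin d) → ℝ} (hu : ContDiff ℝ 1 u)
    (hgrad : Integrable (fun x => ‖gradient u x‖ ^ 2 * ρk x))
    (hu2 : Integrable (fun x => u x ^ 2 * ρk x)) :
    Θ * ((∫ x, u x ^ 2 * ρk x) - (∫ x, u x * ρk x) ^ 2) ≤ ∫ x, ‖gradient u x‖ ^ 2 * ρk x := by
  have hu1 := integrable_mul_of_integrable_sq_mul hρ hρi hu.continuous.aestronglyMeasurable hu2
  have hgrad0 : 0 ≤ ∫ x, ‖gradient u x‖ ^ 2 * ρk x :=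
    integral_nonneg fun x => mul_nonneg (sq_nonneg _) (hρ x)
  rw [← integral_sub_integral_sq_mul hρi hρ1 hu1 hu2]
  set m := ∫ x, u x * ρk x
  have hvar0 : 0 ≤ ∫ x, (u x - m) ^ 2 * ρk x :=
    integral_nonneg fun x => mul_nonneg (sq_nonneg _) (hρ x)
  rcases hvar0.eq_or_lt with hvar | hvar
  · rw [← hvar, mul_zero]
    exact hgrad0
  have hmem : (∫ x, ‖gradient u x‖ ^ 2 * ρk x) / (∫ x, (u x - m) ^ 2 * ρk x) ∈
      rayleighSet ρk :=
    ⟨fun x => u x - m, hu.sub contDiff_const, by rwa [gradient_sub_const],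
      integrable_sub_sq_mul m hρi hu1 hu2, integral_sub_integral_mul hρi hρ1 hu1, hvar,
      by rw [gradient_sub_const]⟩
  calc Θ * ∫ x, (u x - m) ^ 2 * ρk x
      ≤ (∫ x, ‖gradient u x‖ ^ 2 * ρk x) / (∫ x, (u x - m) ^ 2 * ρk x) *
          ∫ x, (u x - m) ^ 2 * ρk x :=
        mul_le_mul_of_nonneg_right (hΘ.trans (csInf_le (bddBelow_rayleighSet hρ) hmem)) hvar.le
    _ = ∫ x, ‖gradient u x‖ ^ 2 * ρk x := div_mul_cancel₀ _ hvar.ne'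

end Rayleigh

theorem statement7_general {d : ℕ} {N : ℕ}
    (w : Fin N → ℝ) (hw : ∀ k, 0 < w k) (hw1 : ∑ k, w k = 1)
    (ρ : Fin N → EuclideanSpace ℝ (Fin d) → ℝ)
    (hρpos : ∀ k x, 0 < ρ k x)
    (hρ1 : ∀ k, ∫ x, ρ k x = 1)
    (ρtot : EuclideanSpace ℝ (Fin d) → ℝ)
    (hρtot : ρtot = fun x => ∑ k, w k * ρ k x)
    (S : ℝ)
    (hS : IsGreatest
      ((fun p : Fin N × Fin N => ∫ x, ρ p.1 x * ρ p.2 x / ρtot x) ''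
        {p | p.1 ≠ p.2}) S)
    (Ccoup : ℝ)
    (Θ : ℝ) (hΘnn : 0 ≤ Θ)
    (hΘ : IsLeast {a : ℝ | ∃ k, a = sInf (rayleighSet (ρ k))} Θ)
    (hS1 : S < 1)
    (u : EuclideanSpace ℝ (Fin d) → ℝ) (hu : ContDiff ℝ 1 u)
    (hu1 : Integrable (fun x => ‖gradient u x‖ ^ 2 * ρtot x))
    (hu2 : Integrable (fun x => u x ^ 2 * ρtot x))
    (hnorm : ∫ x, u x ^ 2 * ρtot x = 1)
    (horth : ∀ j : Fin N, ∫ x, u x * Real.sqrt (w j * ρ j x / ρtot x) * ρtot x = 0) :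
    Real.sqrt (Θ * (1 - (N : ℝ) * S)) - Real.sqrt (Ccoup * N * S) / (1 - S) ≤
      Real.sqrt (∫ x, ‖gradient u x‖ ^ 2 * ρtot x) := by
  obtain rfl : ρtot = mixture w ρ := hρtot
  have hρi : ∀ k, Integrable (ρ k) := fun k =>
    Integrable.of_integral_ne_zero (by rw [hρ1 k]; exact one_ne_zero)
  have hum := hu.continuous.aestronglyMeasurable (μ := volume)
  have hS0 : 0 ≤ S := by
    obtain ⟨p, -, rfl⟩ := hS.1
    exact integral_nonneg fun x =>
      div_nonneg (mul_pos (hρpos _ x) (hρpos _ x)).le (mixture_nonneg hw hρpos x)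
  have hmeans := sum_mul_sq_integral_mul_le hw hw1 hρpos hρi hS0
    (fun i j hij => hS.2 ⟨(i, j), hij, rfl⟩) hum hu2 horth
  rw [hnorm, mul_one, Fintype.card_fin] at hmeans
  have hu2k : ∀ k, Integrable (fun x => u x ^ 2 * ρ k x) := fun k =>
    hu2.mul_of_mul_mixture hw hρpos (fun x => sq_nonneg _) (hum.pow 2) (hρi k).1
  have hgradk : ∀ k, Integrable (fun x => ‖gradient u x‖ ^ 2 * ρ k x) := fun k =>
    hu1.mul_of_mul_mixture hw hρpos (fun x => sq_nonneg _)
      ((measurable_gradient u).norm.pow_const 2).aestronglyMeasurable (hρi k).1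
  have hgap := mul_sub_le_integral_mul_mixture hw hΘnn hu2k hgradk (fun k =>
    mul_variance_le_of_le_sInf_rayleighSet (hΘ.2 ⟨k, rfl⟩) (fun x => (hρpos k x).le) (hρi k)
      (hρ1 k) hu (hgradk k) (hu2k k)) hmeans
  rw [hnorm] at hgap
  calc √(Θ * (1 - N * S)) - √(Ccoup * N * S) / (1 - S) ≤ √(Θ * (1 - N * S)) :=
        sub_le_self _ (div_nonneg (sqrt_nonneg _) (sub_nonneg.2 hS1.le))
    _ ≤ _ := sqrt_le_sqrt hgap

/-- lower bound for the `(N+1)`-st eigenvalue: every `C¹` function `u`,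
normalized in `L²(ρ)` and orthogonal in `L²(ρ)` to all `q_j`, satisfies
`√(Θ(1 − N S)) − √(C N S)/(1 − S) ≤ (∫ |∇u|² ρ dx)^{1/2}`. -/
theorem statement7 {d : ℕ} {N : ℕ} (hN : 2 ≤ N)
    (w : Fin N → ℝ) (hw : ∀ k, 0 < w k) (hw1 : ∑ k, w k = 1)
    (ρ : Fin N → EuclideanSpace ℝ (Fin d) → ℝ)
    (hρC1 : ∀ k, ContDiff ℝ 1 (ρ k)) (hρpos : ∀ k x, 0 < ρ k x)
    (hρ1 : ∀ k, ∫ x, ρ k x = 1)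
    (ρtot : EuclideanSpace ℝ (Fin d) → ℝ)
    (hρtot : ρtot = fun x => ∑ k, w k * ρ k x)
    (S : ℝ)
    (hS : IsGreatest
      ((fun p : Fin N × Fin N => ∫ x, ρ p.1 x * ρ p.2 x / ρtot x) ''
        {p | p.1 ≠ p.2}) S)
    (Ccoup : ℝ)
    (hCfin : ∀ k, Integrable (fun x =>
      ‖(ρ k x)⁻¹ • gradient (ρ k) x - (ρtot x)⁻¹ • gradient ρtot x‖ ^ 2 * ρ k x))
    (hC : IsGreatest {c : ℝ | ∃ k, c = (1 / 4) *
      ∫ x, ‖(ρ k x)⁻¹ • gradient (ρ k) x - (ρtot x)⁻¹ • gradient ρtot x‖ ^ 2 * ρ k x} Ccoup)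
    (Θ : ℝ) (hΘnn : 0 ≤ Θ)
    (hΘ : IsLeast {a : ℝ | ∃ k, a = sInf (rayleighSet (ρ k))} Θ)
    (hS1 : S < 1) (hNS : (N : ℝ) * S < 1)
    (u : EuclideanSpace ℝ (Fin d) → ℝ) (hu : ContDiff ℝ 1 u)
    (hu1 : Integrable (fun x => ‖gradient u x‖ ^ 2 * ρtot x))
    (hu2 : Integrable (fun x => u x ^ 2 * ρtot x))
    (hnorm : ∫ x, u x ^ 2 * ρtot x = 1)
    (horth : ∀ j : Fin N, ∫ x, u x * Real.sqrt (w j * ρ j x / ρtot x) * ρtot x = 0) :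
    Real.sqrt (Θ * (1 - (N : ℝ) * S)) - Real.sqrt (Ccoup * N * S) / (1 - S) ≤
      Real.sqrt (∫ x, ‖gradient u x‖ ^ 2 * ρtot x) :=
  statement7_general w hw hw1 ρ hρpos hρ1 ρtot hρtot S hS Ccoup Θ hΘnn hΘ hS1 u hu hu1 hu2 hnorm
    horth
end
end
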